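/- arXiv:2507.10872 — 3 statements merged into one kernel-verified Lean document; each statement's English description precedes it below -/
import Mathlib

section
/- Let l ≥ 1 and let T ⊆ B×S×D be a set of hyperedges on finite sets with |B|=|S|=|D|=l. Consider the market on (B,S,D) where every buyer values every store at 1 (v_b(s)=1 for all b,s) and courier costs are c_d(b,s)=0 if (b,s,d) ∈ T and c_d(b,s)=1 otherwise. Then T contains a perfect three-dimensional matching (a subset of T of size l in which each element of B, of S, and of D appears exactly once) if and only if there exists a with-tip equilibrium of this market whose allocation has welfare l. (This is the reduction establishing that computing the optimal with-tip equilibrium welfare is NP-hard.) -/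
/-
With zero prices, compensations and tips, a perfect matching `M ⊆ T` is a with-tip equilibrium:
every order of `M` costs its courier nothing, so it is a best response without any tip, the
minimum tip of every order of `M` is `0`, and since `M` is perfect no buyer or courier is left
out. Conversely, the welfare of an allocation in this market is the number of its executed
triples lying in `T`, and by feasibility those triples form a matching; welfare `l` thus exhibits
a perfect matching.
-/

open scoped Classical
noncomputable section

namespace DeliveryPlatform

variable {m n l : ℕ}

/-- A (three-sided) allocation `x` is feasible if each buyer, each store and each
courier appears in at most one executed triple. -/
def Feasible (x : Fin m → Fin n → Fin l → Bool) : Prop :=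
  (∀ b s d s' d', x b s d → x b s' d' → s = s' ∧ d = d') ∧
  (∀ b s d b' d', x b s d → x b' s d' → b = b' ∧ d = d') ∧
  (∀ b s d b' s', x b s d → x b' s' d → b = b' ∧ s = s')

/-- The welfare of an allocation: `W(x) = Σ x_{bsd} (v_b(s) − c_d(b,s))`. -/
def Welfare (v : Fin m → Fin n → ℝ) (c : Fin l → Fin m → Fin n → ℝ)
    (x : Fin m → Fin n → Fin l → Bool) : ℝ :=
  ∑ b, ∑ s, ∑ d, if x b s d then v b s - c d b s else 0

/-- The optimal welfare over all feasible allocations. -/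
def OPT (v : Fin m → Fin n → ℝ) (c : Fin l → Fin m → Fin n → ℝ) : ℝ :=
  sSup {r : ℝ | ∃ x, Feasible x ∧ Welfare v c x = r}

/-- Utility of courier `d` from delivering the order `(b,s)`:
`w_{bs} + t_{bs} − c_d(b,s)`. -/
def cUtil (c : Fin l → Fin m → Fin n → ℝ) (w t : Fin m → Fin n → ℝ)
    (d : Fin l) (b : Fin m) (s : Fin n) : ℝ :=
  w b s + t b s - c d b s

/-- `(b,s) ∈ BR_d(w,t)`: the order `(b,s)` is utility-maximizing for courier `d`
and has nonnegative utility. -/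
def InBR (c : Fin l → Fin m → Fin n → ℝ) (w t : Fin m → Fin n → ℝ)
    (d : Fin l) (b : Fin m) (s : Fin n) : Prop :=
  0 ≤ cUtil c w t d b s ∧ ∀ b' s', cUtil c w t d b' s' ≤ cUtil c w t d b s

/-- Replace buyer `b`'s tip vector by `tb`, keeping the tips of all other
buyers (`t_{−b}`) fixed. -/
def updateTips (t : Fin m → Fin n → ℝ) (b : Fin m) (tb : Fin n → ℝ) :
    Fin m → Fin n → ℝ :=
  fun b' s' => if b' = b then tb s' else t b' s'

/-- The minimum tip `t̲_{bs}(w, t_{−b})`: the smallest nonnegative tip that buyer `b`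
can attach to the order `(b,s)` (as part of some nonnegative tip vector)
so that `(b,s) ∈ BR_d` for some courier `d`. -/
def minTip (c : Fin l → Fin m → Fin n → ℝ) (w t : Fin m → Fin n → ℝ)
    (b : Fin m) (s : Fin n) : ℝ :=
  sInf {τ : ℝ | 0 ≤ τ ∧ ∃ tb : Fin n → ℝ, (∀ s', 0 ≤ tb s') ∧ tb s = τ ∧
    ∃ d, InBR c w (updateTips t b tb) d b s}

/-- A with-tip equilibrium `(p, w, t, x)`. -/
def WithTipEq (v : Fin m → Fin n → ℝ) (c : Fin l → Fin m → Fin n → ℝ)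
    (p : Fin n → ℝ) (w t : Fin m → Fin n → ℝ)
    (x : Fin m → Fin n → Fin l → Bool) : Prop :=
  Feasible x ∧
  (∀ s, 0 ≤ p s) ∧ (∀ b s, 0 ≤ w b s) ∧ (∀ b s, 0 ≤ t b s) ∧
  -- every matched buyer buys from a utility-maximizing store, with nonnegative
  -- utility, and pays exactly the minimum tip for the store she buys from
  (∀ b s, (∃ d, x b s d) →
    0 ≤ v b s - p s - minTip c w t b s ∧
    (∀ s', v b s' - p s' - minTip c w t b s' ≤ v b s - p s - minTip c w t b s) ∧
    t b s = minTip c w t b s) ∧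
  -- an unmatched buyer finds no store of positive utility
  (∀ b, (∀ s d, ¬ x b s d) → ∀ s, v b s - p s - minTip c w t b s ≤ 0) ∧
  -- every courier delivers an order in BR_d(w,t)
  (∀ d b s, x b s d → InBR c w t d b s) ∧
  (∀ d, (∀ b s, ¬ x b s d) → ∀ b s, cUtil c w t d b s ≤ 0) ∧
  -- stores not bought from have zero purchase price
  (∀ s, (∀ b d, ¬ x b s d) → p s = 0) ∧
  -- orders not delivered have zero compensation and zero tip
  (∀ b s, (∀ d, ¬ x b s d) → w b s = 0 ∧ t b s = 0)

/-- A without-tip equilibrium `(p, w, x)`. -/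
def WithoutTipEq (v : Fin m → Fin n → ℝ) (c : Fin l → Fin m → Fin n → ℝ)
    (p : Fin n → ℝ) (w : Fin m → Fin n → ℝ)
    (x : Fin m → Fin n → Fin l → Bool) : Prop :=
  Feasible x ∧
  (∀ s, 0 ≤ p s) ∧ (∀ b s, 0 ≤ w b s) ∧
  (∀ b s, (∃ d, x b s d) →
    0 ≤ v b s - p s ∧ ∀ s', v b s' - p s' ≤ v b s - p s) ∧
  (∀ b, (∀ s d, ¬ x b s d) → ∀ s, v b s - p s ≤ 0) ∧
  (∀ d b s, x b s d →
    0 ≤ w b s - c d b s ∧ ∀ b' s', w b' s' - c d b' s' ≤ w b s - c d b s) ∧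
  (∀ d, (∀ b s, ¬ x b s d) → ∀ b s, w b s - c d b s ≤ 0) ∧
  (∀ s, (∀ b d, ¬ x b s d) → p s = 0) ∧
  (∀ b s, (∀ d, ¬ x b s d) → w b s = 0)

/-- A perfect three-dimensional matching within the hyperedge set `T`. -/
def HasPerfectMatching (l : ℕ) (T : Finset (Fin l × Fin l × Fin l)) : Prop :=
  ∃ M : Finset (Fin l × Fin l × Fin l), M ⊆ T ∧ M.card = l ∧
    ∀ e ∈ M, ∀ e' ∈ M,
      (e.1 = e'.1 ∨ e.2.1 = e'.2.1 ∨ e.2.2 = e'.2.2) → e = e'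

def IsMatching {α β γ : Type*} (M : Finset (α × β × γ)) : Prop :=
  ∀ e ∈ M, ∀ e' ∈ M, (e.1 = e'.1 ∨ e.2.1 = e'.2.1 ∨ e.2.2 = e'.2.2) → e = e'

namespace IsMatching

variable {α β γ : Type*} {M : Finset (α × β × γ)}

lemma subset (hM : IsMatching M) {M' : Finset (α × β × γ)} (h : M' ⊆ M) : IsMatching M' :=
  fun e he e' he' hshare => hM e (h he) e' (h he') hshare

lemma exists_fst_eq [Fintype α] (hM : IsMatching M) (hcard : M.card = Fintype.card α) (a : α) :
    ∃ e ∈ M, e.1 = a :=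
  Finset.surjOn_of_injOn_of_card_le (t := Finset.univ) Prod.fst
    (fun e _ => Finset.mem_coe.2 (Finset.mem_univ e.1))
    (fun e he e' he' h => hM e he e' he' (Or.inl h))
    (by rw [Finset.card_univ, hcard]) (Finset.mem_coe.2 (Finset.mem_univ a))

lemma exists_snd_snd_eq [Fintype γ] (hM : IsMatching M) (hcard : M.card = Fintype.card γ)
    (c : γ) : ∃ e ∈ M, e.2.2 = c :=
  Finset.surjOn_of_injOn_of_card_le (t := Finset.univ) (fun e : α × β × γ => e.2.2)
    (fun e _ => Finset.mem_coe.2 (Finset.mem_univ e.2.2))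
    (fun e he e' he' h => hM e he e' he' (Or.inr (Or.inr h)))
    (by rw [Finset.card_univ, hcard]) (Finset.mem_coe.2 (Finset.mem_univ c))

end IsMatching

def support (x : Fin m → Fin n → Fin l → Bool) : Finset (Fin m × Fin n × Fin l) :=
  Finset.univ.filter fun e => x e.1 e.2.1 e.2.2

def allocOf (M : Finset (Fin m × Fin n × Fin l)) : Fin m → Fin n → Fin l → Bool :=
  fun b s d => decide ((b, s, d) ∈ M)

@[simp]
lemma mem_support {x : Fin m → Fin n → Fin l → Bool} {e : Fin m × Fin n × Fin l} :
    e ∈ support x ↔ x e.1 e.2.1 e.2.2 := by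
  simp [support]

@[simp]
lemma support_allocOf (M : Finset (Fin m × Fin n × Fin l)) : support (allocOf M) = M := by
  ext e
  simp [allocOf]

lemma feasible_iff_isMatching_support {x : Fin m → Fin n → Fin l → Bool} :
    Feasible x ↔ IsMatching (support x) := by
  constructor
  · rintro ⟨hb, hs, hd⟩ ⟨b, s, d⟩ he ⟨b', s', d'⟩ he' hshare
    rw [mem_support] at he he'
    rcases hshare with rfl | rfl | rfl
    · obtain ⟨rfl, rfl⟩ := hb _ _ _ _ _ he he'; rfl
    · obtain ⟨rfl, rfl⟩ := hs _ _ _ _ _ he he'; rfl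
    · obtain ⟨rfl, rfl⟩ := hd _ _ _ _ _ he he'; rfl
  · intro hM
    have key : ∀ {b s d b' s' d'}, x b s d → x b' s' d' →
        (b = b' ∨ s = s' ∨ d = d') → b = b' ∧ s = s' ∧ d = d' :=
      fun {b s d b' s' d'} he he' hshare => by
        simpa using hM (b, s, d) (mem_support.2 he) (b', s', d') (mem_support.2 he') hshare
    refine ⟨fun b s d s' d' h h' => (key h h' (Or.inl rfl)).2,
      fun b s d b' d' h h' => ?_, fun b s d b' s' h h' => ?_⟩
    · obtain ⟨hb, -, hd⟩ := key h h' (Or.inr (Or.inl rfl)); exact ⟨hb, hd⟩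
    · obtain ⟨hb, hs, -⟩ := key h h' (Or.inr (Or.inr rfl)); exact ⟨hb, hs⟩

lemma welfare_eq_sum_support (v : Fin m → Fin n → ℝ) (c : Fin l → Fin m → Fin n → ℝ)
    (x : Fin m → Fin n → Fin l → Bool) :
    Welfare v c x = ∑ e ∈ support x, (v e.1 e.2.1 - c e.2.2 e.1 e.2.1) := by
  rw [support, Finset.sum_filter, Fintype.sum_prod_type]
  simp only [Fintype.sum_prod_type]
  rfl

lemma welfare_indicator_cost_eq_card (T : Finset (Fin m × Fin n × Fin l))
    (x : Fin m → Fin n → Fin l → Bool) :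
    Welfare (fun _ _ => (1 : ℝ)) (fun d b s => if (b, s, d) ∈ T then (0 : ℝ) else 1) x =
      ((support x).filter (· ∈ T)).card := by
  rw [welfare_eq_sum_support, ← Finset.sum_boole]
  refine Finset.sum_congr rfl fun e _ => ?_
  split_ifs <;> norm_num

lemma minTip_nonneg (c : Fin l → Fin m → Fin n → ℝ) (w t : Fin m → Fin n → ℝ)
    (b : Fin m) (s : Fin n) : 0 ≤ minTip c w t b s :=
  Real.sInf_nonneg fun _ hτ => hτ.1

section Equilibrium

variable {c : Fin l → Fin m → Fin n → ℝ}

lemma inBR_zero_of_cost_eq_zero (hc : ∀ d b s, 0 ≤ c d b s) {d : Fin l} {b : Fin m} {s : Fin n}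
    (h : c d b s = 0) : InBR c 0 0 d b s := by
  refine ⟨by simp [cUtil, h], fun b' s' => ?_⟩
  simpa [cUtil, h] using hc d b' s'

lemma minTip_zero_eq_zero_of_cost_eq_zero (hc : ∀ d b s, 0 ≤ c d b s) {d : Fin l} {b : Fin m}
    {s : Fin n} (h : c d b s = 0) : minTip c 0 0 b s = 0 := by
  have hupdate : updateTips (0 : Fin m → Fin n → ℝ) b 0 = 0 := by
    ext b' s'
    simp [updateTips]
  refine IsLeast.csInf_eq ⟨⟨le_rfl, 0, fun _ => le_rfl, rfl, d, ?_⟩, fun _ hτ => hτ.1⟩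
  rw [hupdate]
  exact inBR_zero_of_cost_eq_zero hc h

lemma withTipEq_zero {v : Fin m → Fin n → ℝ} {x : Fin m → Fin n → Fin l → Bool}
    (hc : ∀ d b s, 0 ≤ c d b s) (hx : Feasible x) (hcost : ∀ b s d, x b s d → c d b s = 0)
    (hv : ∀ b s d, x b s d → 0 ≤ v b s ∧ ∀ s', v b s' ≤ v b s)
    (hbuyer : ∀ b, ∃ s d, x b s d) (hcourier : ∀ d, ∃ b s, x b s d) :
    WithTipEq v c 0 0 0 x := by
  refine ⟨hx, fun _ => le_rfl, fun _ _ => le_rfl, fun _ _ => le_rfl, ?_, ?_,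
    fun d b s h => inBR_zero_of_cost_eq_zero hc (hcost b s d h), ?_,
    fun _ _ => rfl, fun _ _ _ => ⟨rfl, rfl⟩⟩
  · rintro b s ⟨d, h⟩
    have hzero := minTip_zero_eq_zero_of_cost_eq_zero hc (hcost b s d h)
    obtain ⟨hv0, hvmax⟩ := hv b s d h
    refine ⟨by simpa [hzero] using hv0, fun s' => ?_, hzero.symm⟩
    have := minTip_nonneg c 0 0 b s'
    simp only [Pi.zero_apply, hzero]
    linarith [hvmax s']
  · intro b hb
    obtain ⟨s, d, h⟩ := hbuyer b
    exact absurd h (hb s d)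
  · intro d hd
    obtain ⟨b, s, h⟩ := hcourier d
    exact absurd h (hd b s)

end Equilibrium

theorem three_dm_iff_with_tip_eq_welfare_general
    (l : ℕ) (T : Finset (Fin l × Fin l × Fin l)) :
    HasPerfectMatching l T ↔
      ∃ (p : Fin l → ℝ) (w t : Fin l → Fin l → ℝ)
        (x : Fin l → Fin l → Fin l → Bool),
        WithTipEq (fun _ _ => (1 : ℝ))
          (fun d b s => if (b, s, d) ∈ T then (0 : ℝ) else 1) p w t x ∧
        Welfare (fun _ _ => (1 : ℝ))
          (fun d b s => if (b, s, d) ∈ T then (0 : ℝ) else 1) x = (l : ℝ) := by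
  constructor
  · rintro ⟨M, hMT, hcard, hM : IsMatching M⟩
    have hcard' : M.card = Fintype.card (Fin l) := by rw [hcard, Fintype.card_fin]
    refine ⟨0, 0, 0, allocOf M, withTipEq_zero (by intros; split_ifs <;> norm_num)
      (feasible_iff_isMatching_support.2 (by rwa [support_allocOf]))
      (fun b s d h => if_pos (hMT (of_decide_eq_true h))) (fun _ _ _ _ => ⟨zero_le_one, fun _ => le_rfl⟩)
      (fun b => ?_) (fun d => ?_), ?_⟩
    · obtain ⟨⟨_, s, d⟩, he, rfl⟩ := hM.exists_fst_eq hcard' b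
      exact ⟨s, d, decide_eq_true he⟩
    · obtain ⟨⟨b, s, _⟩, he, rfl⟩ := hM.exists_snd_snd_eq hcard' d
      exact ⟨b, s, decide_eq_true he⟩
    · rw [welfare_indicator_cost_eq_card, support_allocOf, Finset.filter_true_of_mem hMT, hcard]
  · rintro ⟨p, w, t, x, ⟨hx, -⟩, hW⟩
    rw [welfare_indicator_cost_eq_card, Nat.cast_inj] at hW
    exact ⟨_, fun e he => (Finset.mem_filter.1 he).2, hW,
      (feasible_iff_isMatching_support.1 hx).subset (Finset.filter_subset _ _)⟩

/-- `T` contains a perfect three-dimensional matching iff the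
associated market (unit valuations, costs `0` on hyperedges of `T` and `1`
otherwise) has a with-tip equilibrium whose allocation has welfare `l`. -/
theorem three_dm_iff_with_tip_eq_welfare
    (l : ℕ) (hl : 1 ≤ l) (T : Finset (Fin l × Fin l × Fin l)) :
    HasPerfectMatching l T ↔
      ∃ (p : Fin l → ℝ) (w t : Fin l → Fin l → ℝ)
        (x : Fin l → Fin l → Fin l → Bool),
        WithTipEq (fun _ _ => (1 : ℝ))
          (fun d b s => if (b, s, d) ∈ T then (0 : ℝ) else 1) p w t x ∧
        Welfare (fun _ _ => (1 : ℝ))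
          (fun d b s => if (b, s, d) ∈ T then (0 : ℝ) else 1) x = (l : ℝ) :=
  three_dm_iff_with_tip_eq_welfare_general l T

end DeliveryPlatform
end
end

section
/- Let x be a feasible allocation and suppose (p, w, t, x) is a with-tip equilibrium with all tips zero, t = 0. Then (p, w̄, t, x) is also a with-tip equilibrium, where w̄ are the delivery compensations of a courier plan serving Ω_x with w̄_{bs} = 0 for (b,s) ∉ Ω_x under which every courier attains the maximal courier-plan utility ū_d. -/
/-!
Both `(w, x)` and `(w̄, y)` are courier plans serving `Ω_x`. Summing courier utilities shows
that the matching of a courier plan has minimum cost among matchings serving the same orders, so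
the two matchings cost the same and `w̄` supports the matching of `x` as well; this settles the
couriers. With zero tips, the minimum tip of an order `o` is `min_d (u_d + c_d(o) − w_o)`, where
`u_d` is the courier's utility in any courier plan for `w`. Hence it vanishes on `Ω_x`, and off
`Ω_x`, where both compensations are zero, it can only grow: if `|Ω_x| < l` because every
courier-plan utility is bounded by the externality `C_Ω(G_D \ d) − C_Ω(G_D) = ū_d`, and if
`|Ω_x| = l` because `ū_d ≥ v_b(s)` prices all such orders out.
-/

open scoped Classical
noncomputable section

namespace DeliveryPlatform

variable {m n l : ℕ}

/-- A courier allocation: a matching in the bipartite graph `G_D` between orders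
and couriers, in which additionally no buyer and no store appears in more than
one matched order. -/
def CourierAlloc (y : Fin m × Fin n → Fin l → Bool) : Prop :=
  (∀ d o o', y o d → y o' d → o = o') ∧
  (∀ o d d', y o d → y o d' → d = d') ∧
  (∀ o d o' d', y o d → y o' d' → o.1 = o'.1 → o = o') ∧
  (∀ o d o' d', y o d → y o' d' → o.2 = o'.2 → o = o')

/-- Total delivery cost of a courier allocation. -/
def totalCost (c : Fin l → Fin m → Fin n → ℝ)
    (y : Fin m × Fin n → Fin l → Bool) : ℝ :=
  ∑ o, ∑ d, if y o d then c d o.1 o.2 else 0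

/-- The courier allocation `y` covers the set of orders `Ω`. -/
def Covers (Ω : Finset (Fin m × Fin n)) (y : Fin m × Fin n → Fin l → Bool) : Prop :=
  ∀ o ∈ Ω, ∃ d, y o d

/-- The courier allocation `y` serves `Ω`: exactly the orders of `Ω` are delivered. -/
def Serves (Ω : Finset (Fin m × Fin n)) (y : Fin m × Fin n → Fin l → Bool) : Prop :=
  ∀ o, (∃ d, y o d) ↔ o ∈ Ω

/-- `C_Ω(G_D)`: the minimum total cost of a courier allocation covering `Ω`. -/
def minCost (c : Fin l → Fin m → Fin n → ℝ) (Ω : Finset (Fin m × Fin n)) : ℝ :=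
  sInf {r : ℝ | ∃ y, CourierAlloc y ∧ Covers Ω y ∧ totalCost c y = r}

/-- `C_Ω(G_D \ d₀)`: the minimum total cost of a courier allocation covering `Ω`
in which courier `d₀` is unused. -/
def minCostWithout (c : Fin l → Fin m → Fin n → ℝ) (Ω : Finset (Fin m × Fin n))
    (d0 : Fin l) : ℝ :=
  sInf {r : ℝ | ∃ y, CourierAlloc y ∧ Covers Ω y ∧ (∀ o, ¬ y o d0) ∧
    totalCost c y = r}

/-- A courier plan `(w, y)`: every matched courier delivers a utility-maximizing
order with nonnegative utility, and every unmatched courier has no order of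
positive utility. -/
def CourierPlan (c : Fin l → Fin m → Fin n → ℝ) (w : Fin m × Fin n → ℝ)
    (y : Fin m × Fin n → Fin l → Bool) : Prop :=
  CourierAlloc y ∧ (∀ o, 0 ≤ w o) ∧
  (∀ d o, y o d →
    0 ≤ w o - c d o.1 o.2 ∧ ∀ o', w o' - c d o'.1 o'.2 ≤ w o - c d o.1 o.2) ∧
  (∀ d, (∀ o, ¬ y o d) → ∀ o, w o - c d o.1 o.2 ≤ 0)

/-- Utility of courier `d` in the courier plan `(w, y)` (zero if unmatched). -/
def planUtil (c : Fin l → Fin m → Fin n → ℝ) (w : Fin m × Fin n → ℝ)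
    (y : Fin m × Fin n → Fin l → Bool) (d : Fin l) : ℝ :=
  ∑ o, if y o d then w o - c d o.1 o.2 else 0

/-- In `Ω`, every buyer and every store appears at most once. -/
def PairwiseDistinct (Ω : Finset (Fin m × Fin n)) : Prop :=
  (∀ o ∈ Ω, ∀ o' ∈ Ω, Prod.fst o = Prod.fst o' → o = o') ∧
  (∀ o ∈ Ω, ∀ o' ∈ Ω, Prod.snd o = Prod.snd o' → o = o')

/-- `Ω_x`: the set of orders delivered under the allocation `x`. -/
def OrdersOf (x : Fin m → Fin n → Fin l → Bool) : Finset (Fin m × Fin n) :=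
  Finset.univ.filter fun o => ∃ d, x o.1 o.2 d

theorem sInf_setOf_exists_le_eq_iInf {ι : Type*} [Finite ι] (θ : ι → ℝ) :
    sInf {τ : ℝ | ∃ i, θ i ≤ τ} = ⨅ i, θ i := by
  rcases isEmpty_or_nonempty ι with hι | hι
  · simp
  obtain ⟨i₀, hi₀⟩ := exists_eq_ciInf_of_finite (f := θ)
  refine hi₀ ▸ IsLeast.csInf_eq ⟨⟨i₀, le_rfl⟩, ?_⟩
  rintro τ ⟨i, hi⟩
  exact hi₀ ▸ (ciInf_le (Set.finite_range θ).bddBelow i).trans hi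

section CourierPlans

variable {c : Fin l → Fin m → Fin n → ℝ} {W : Fin m × Fin n → ℝ}
  {z z' : Fin m × Fin n → Fin l → Bool} {Ω : Finset (Fin m × Fin n)}

theorem Serves.covers (hserve : Serves Ω z) : Covers Ω z :=
  fun o ho => (hserve o).2 ho

theorem Serves.card_le (hserve : Serves Ω z) (halloc : CourierAlloc z) : Ω.card ≤ l := by
  choose f hf using fun o : Ω => (hserve o).2 o.2
  have hf_inj : Function.Injective f := fun o o' h =>
    Subtype.ext (halloc.1 _ _ _ (hf o) (h ▸ hf o'))
  simpa using Fintype.card_le_of_injective f hf_inj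

theorem planUtil_eq_of_mem (halloc : CourierAlloc z) {o : Fin m × Fin n} {d : Fin l}
    (hod : z o d) : planUtil c W z d = W o - c d o.1 o.2 := by
  rw [planUtil, Finset.sum_eq_single o (fun o' _ hne => if_neg fun h => hne (halloc.1 d o' o h hod))
    (by simp), if_pos hod]

theorem planUtil_eq_zero {d : Fin l} (hd : ∀ o, ¬ z o d) : planUtil c W z d = 0 :=
  Finset.sum_eq_zero fun o _ => if_neg (hd o)

theorem planUtil_le (halloc : CourierAlloc z) {d : Fin l} {u : ℝ} (hu₀ : 0 ≤ u)
    (hu : ∀ o, W o - c d o.1 o.2 ≤ u) : planUtil c W z d ≤ u := by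
  by_cases hd : ∃ o, z o d
  · obtain ⟨o, hod⟩ := hd
    exact planUtil_eq_of_mem halloc hod ▸ hu o
  · exact (planUtil_eq_zero (not_exists.1 hd)).trans_le hu₀

theorem sum_planUtil (halloc : CourierAlloc z) (hserve : Serves Ω z) :
    ∑ d, planUtil c W z d = ∑ o ∈ Ω, W o - totalCost c z := by
  have hpay : ∀ o, ∑ d, (if z o d then W o else 0) = if o ∈ Ω then W o else 0 := by
    intro o
    split_ifs with ho
    · obtain ⟨d, hd⟩ := (hserve o).2 ho
      rw [Finset.sum_eq_single d (fun d' _ hne => if_neg fun h => hne (halloc.2.1 o d' d h hd))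
        (by simp), if_pos hd]
    · exact Finset.sum_eq_zero fun d _ => if_neg fun h => ho ((hserve o).1 ⟨d, h⟩)
  have hsplit : ∀ o d, (if z o d then W o - c d o.1 o.2 else 0) =
      (if z o d then W o else 0) - if z o d then c d o.1 o.2 else 0 := by
    intro o d
    split_ifs <;> simp
  simp only [planUtil, totalCost]
  rw [Finset.sum_comm]
  simp only [hsplit, Finset.sum_sub_distrib, hpay, Finset.sum_ite_mem, Finset.univ_inter]

namespace CourierPlan

theorem sub_le_planUtil (hplan : CourierPlan c W z) (d : Fin l) (o : Fin m × Fin n) :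
    W o - c d o.1 o.2 ≤ planUtil c W z d := by
  by_cases hd : ∃ o', z o' d
  · obtain ⟨o', ho'⟩ := hd
    exact planUtil_eq_of_mem hplan.1 ho' ▸ (hplan.2.2.1 d o' ho').2 o
  · exact (planUtil_eq_zero (not_exists.1 hd)).symm ▸ hplan.2.2.2 d (not_exists.1 hd) o

theorem planUtil_nonneg (hplan : CourierPlan c W z) (d : Fin l) : 0 ≤ planUtil c W z d := by
  by_cases hd : ∃ o, z o d
  · obtain ⟨o, hod⟩ := hd
    exact planUtil_eq_of_mem hplan.1 hod ▸ (hplan.2.2.1 d o hod).1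
  · exact (planUtil_eq_zero (not_exists.1 hd)).ge

theorem planUtil_le_planUtil (hplan : CourierPlan c W z) (halloc' : CourierAlloc z')
    (d : Fin l) : planUtil c W z' d ≤ planUtil c W z d :=
  planUtil_le halloc' (hplan.planUtil_nonneg d) (hplan.sub_le_planUtil d)

theorem totalCost_le (hplan : CourierPlan c W z) (hserve : Serves Ω z)
    (halloc' : CourierAlloc z') (hserve' : Serves Ω z') : totalCost c z ≤ totalCost c z' := by
  have := Finset.sum_le_sum fun d (_ : d ∈ Finset.univ) => hplan.planUtil_le_planUtil halloc' d
  rw [sum_planUtil halloc' hserve', sum_planUtil hplan.1 hserve] at this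
  linarith

/-- Passing from `z` to `z'` can only lower each courier's utility, but it does not lower
their sum. -/
theorem of_totalCost_le (hplan : CourierPlan c W z) (hserve : Serves Ω z)
    (halloc' : CourierAlloc z') (hserve' : Serves Ω z') (hcost : totalCost c z' ≤ totalCost c z) :
    CourierPlan c W z' := by
  have hsum : ∑ d, planUtil c W z d ≤ ∑ d, planUtil c W z' d := by
    rw [sum_planUtil halloc' hserve', sum_planUtil hplan.1 hserve]
    linarith
  have hutil : ∀ d, planUtil c W z' d = planUtil c W z d := fun d =>
    (Finset.sum_eq_sum_iff_of_le fun d _ => hplan.planUtil_le_planUtil halloc' d).1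
      (le_antisymm (Finset.sum_le_sum fun d _ => hplan.planUtil_le_planUtil halloc' d) hsum)
      d (Finset.mem_univ d)
  refine ⟨halloc', hplan.2.1, fun d o hod => ?_, fun d hd o => ?_⟩
  · rw [← planUtil_eq_of_mem halloc' hod, hutil]
    exact ⟨hplan.planUtil_nonneg d, hplan.sub_le_planUtil d⟩
  · have := hplan.sub_le_planUtil d o
    rwa [← hutil, planUtil_eq_zero hd] at this

theorem planUtil_add_totalCost_le (hplan : CourierPlan c W z) (hserve : Serves Ω z)
    (halloc' : CourierAlloc z') (hcover' : Covers Ω z') {d : Fin l} (hd : ∀ o, ¬ z' o d) :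
    planUtil c W z d + totalCost c z ≤ totalCost c z' := by
  set Ω' : Finset (Fin m × Fin n) := Finset.univ.filter fun o => ∃ d, z' o d
  have hserve' : Serves Ω' z' := fun o => by simp [Ω']
  have hΩ : ∑ o ∈ Ω, W o ≤ ∑ o ∈ Ω', W o :=
    Finset.sum_le_sum_of_subset_of_nonneg (fun o ho => by simpa [Ω'] using hcover' o ho)
      fun o _ _ => hplan.2.1 o
  have hothers : ∑ d', planUtil c W z' d' ≤ ∑ d' ∈ Finset.univ.erase d, planUtil c W z d' := by
    rw [← Finset.add_sum_erase _ _ (Finset.mem_univ d), planUtil_eq_zero hd, zero_add]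
    exact Finset.sum_le_sum fun d' _ => hplan.planUtil_le_planUtil halloc' d'
  rw [sum_planUtil halloc' hserve'] at hothers
  have htotal := Finset.add_sum_erase Finset.univ (planUtil c W z) (Finset.mem_univ d)
  rw [sum_planUtil hplan.1 hserve] at htotal
  linarith

end CourierPlan

theorem exists_courierAlloc_covers_avoiding (hΩ : PairwiseDistinct Ω) (hcard : Ω.card < l)
    (d : Fin l) : ∃ z : Fin m × Fin n → Fin l → Bool,
      CourierAlloc z ∧ Covers Ω z ∧ ∀ o, ¬ z o d := by
  have hcard' : Fintype.card Ω ≤ Fintype.card {d' : Fin l // d' ≠ d} := by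
    simp only [Fintype.card_coe, Fintype.card_subtype_compl, Fintype.card_unique,
      Fintype.card_fin]
    omega
  obtain ⟨f⟩ := Function.Embedding.nonempty_of_card_le hcard'
  have hz : ∀ o d', decide (∃ ho : o ∈ Ω, (f ⟨o, ho⟩ : Fin l) = d') ↔
      ∃ ho : o ∈ Ω, (f ⟨o, ho⟩ : Fin l) = d' := fun o d' => decide_eq_true_iff
  refine ⟨fun o d' => decide (∃ ho : o ∈ Ω, (f ⟨o, ho⟩ : Fin l) = d'), ⟨?_, ?_, ?_, ?_⟩,
    fun o ho => ⟨f ⟨o, ho⟩, (hz _ _).2 ⟨ho, rfl⟩⟩, fun o h => ?_⟩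
  · intro d' o o' h h'
    obtain ⟨ho, rfl⟩ := (hz _ _).1 h
    obtain ⟨ho', hf⟩ := (hz _ _).1 h'
    simpa using f.injective (Subtype.ext hf.symm)
  · intro o d₁ d₂ h₁ h₂
    obtain ⟨ho, rfl⟩ := (hz _ _).1 h₁
    obtain ⟨ho', rfl⟩ := (hz _ _).1 h₂
    rfl
  · intro o d₁ o' d₂ h h'
    exact hΩ.1 o ((hz _ _).1 h).1 o' ((hz _ _).1 h').1
  · intro o d₁ o' d₂ h h'
    exact hΩ.2 o ((hz _ _).1 h).1 o' ((hz _ _).1 h').1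
  · obtain ⟨ho, hf⟩ := (hz _ _).1 h
    exact (f ⟨o, ho⟩).2 hf

theorem CourierPlan.planUtil_le_minCostWithout_sub_minCost (hplan : CourierPlan c W z)
    (hserve : Serves Ω z) (hΩ : PairwiseDistinct Ω) (hcard : Ω.card < l) (d : Fin l) :
    planUtil c W z d ≤ minCostWithout c Ω d - minCost c Ω := by
  have hmin : minCost c Ω ≤ totalCost c z :=
    csInf_le ((Set.finite_range (totalCost c)).bddBelow.mono (by rintro _ ⟨y, -, -, rfl⟩; simp))
      ⟨z, hplan.1, hserve.covers, rfl⟩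
  obtain ⟨z', halloc', hcover', hd'⟩ := exists_courierAlloc_covers_avoiding hΩ hcard d
  have hwithout : planUtil c W z d + totalCost c z ≤ minCostWithout c Ω d :=
    le_csInf ⟨_, z', halloc', hcover', hd', rfl⟩ fun _ ⟨y, halloc, hcover, hd, hy⟩ =>
      hy ▸ hplan.planUtil_add_totalCost_le hserve halloc hcover hd
  linarith

end CourierPlans

section ZeroTips

variable {c : Fin l → Fin m → Fin n → ℝ} {W : Fin m × Fin n → ℝ}
  {z : Fin m × Fin n → Fin l → Bool}

theorem CourierPlan.inBR (hplan : CourierPlan c W z) {b : Fin m} {s : Fin n} {d : Fin l}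
    (hz : z (b, s) d) : InBR c (fun b s => W (b, s)) (fun _ _ => 0) d b s := by
  obtain ⟨h₀, hmax⟩ := hplan.2.2.1 d (b, s) hz
  exact ⟨by simpa [cUtil] using h₀, fun b' s' => by simpa [cUtil] using hmax (b', s')⟩

theorem CourierPlan.cUtil_nonpos (hplan : CourierPlan c W z) {d : Fin l} (hd : ∀ o, ¬ z o d)
    (b : Fin m) (s : Fin n) : cUtil c (fun b s => W (b, s)) (fun _ _ => 0) d b s ≤ 0 := by
  simpa [cUtil] using hplan.2.2.2 d hd (b, s)

theorem CourierPlan.minTip_eq_iInf (hplan : CourierPlan c W z) (b : Fin m) (s : Fin n) :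
    minTip c (fun b s => W (b, s)) (fun _ _ => 0) b s =
      ⨅ d, (planUtil c W z d + c d b s - W (b, s)) := by
  rw [minTip, ← sInf_setOf_exists_le_eq_iInf]
  congr 1
  ext τ
  constructor
  · rintro ⟨-, tb, htb, rfl, d, hBR⟩
    refine ⟨d, ?_⟩
    have hself : cUtil c (fun b s => W (b, s)) (updateTips (fun _ _ => 0) b tb) d b s =
        W (b, s) + tb s - c d b s := by
      simp [cUtil, updateTips]
    have hle := planUtil_le (W := W) hplan.1 (hself ▸ hBR.1) fun o => by
      have htip : 0 ≤ updateTips (fun _ _ => 0) b tb o.1 o.2 := by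
        unfold updateTips
        split_ifs
        exacts [htb _, le_rfl]
      have := hBR.2 o.1 o.2
      rw [hself] at this
      simp only [cUtil] at this
      linarith
    linarith
  · rintro ⟨d, hd⟩
    have hθ := hplan.sub_le_planUtil d (b, s)
    have hself : cUtil c (fun b s => W (b, s)) (updateTips (fun _ _ => 0) b (Pi.single s τ))
        d b s = W (b, s) + τ - c d b s := by
      simp [cUtil, updateTips]
    refine ⟨by linarith, Pi.single s τ, fun s' => ?_, by simp, d,
      hself ▸ by linarith [hplan.planUtil_nonneg d], fun b' s' => ?_⟩
    · by_cases hs' : s' = s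
      · subst hs'
        rw [Pi.single_eq_same]
        linarith
      · simp [hs']
    · by_cases hbs : (b', s') = (b, s)
      · obtain ⟨rfl, rfl⟩ := Prod.mk.inj hbs
        exact le_rfl
      have hother : cUtil c (fun b s => W (b, s)) (updateTips (fun _ _ => 0) b (Pi.single s τ))
          d b' s' = W (b', s') - c d b' s' := by
        by_cases hb : b' = b
        · subst hb
          have hs : s' ≠ s := fun hs => hbs (hs ▸ rfl)
          simp [cUtil, updateTips, hs]
        · simp [cUtil, updateTips, hb]
      rw [hself, hother]
      linarith [hplan.sub_le_planUtil d (b', s')]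

theorem CourierPlan.minTip_eq_zero (hplan : CourierPlan c W z) {b : Fin m} {s : Fin n}
    {d : Fin l} (hz : z (b, s) d) : minTip c (fun b s => W (b, s)) (fun _ _ => 0) b s = 0 := by
  rw [hplan.minTip_eq_iInf]
  refine le_antisymm ?_ (Real.iInf_nonneg fun d' => ?_)
  · calc ⨅ d', (planUtil c W z d' + c d' b s - W (b, s))
        ≤ planUtil c W z d + c d b s - W (b, s) := ciInf_le (Set.finite_range _).bddBelow d
      _ = 0 := by rw [planUtil_eq_of_mem hplan.1 hz]; ring
  · linarith [hplan.sub_le_planUtil d' (b, s)]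

end ZeroTips

def courierAllocOf (x : Fin m → Fin n → Fin l → Bool) : Fin m × Fin n → Fin l → Bool :=
  fun o d => x o.1 o.2 d

theorem mem_ordersOf {x : Fin m → Fin n → Fin l → Bool} {o : Fin m × Fin n} :
    o ∈ OrdersOf x ↔ ∃ d, x o.1 o.2 d := by
  simp [OrdersOf]

theorem serves_courierAllocOf (x : Fin m → Fin n → Fin l → Bool) :
    Serves (OrdersOf x) (courierAllocOf x) :=
  fun _ => mem_ordersOf.symm

namespace Feasible

variable {x : Fin m → Fin n → Fin l → Bool}

theorem courierAlloc (hx : Feasible x) : CourierAlloc (courierAllocOf x) := by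
  refine ⟨fun d o o' h h' => ?_, fun o d d' h h' => (hx.1 _ _ _ _ _ h h').2,
    fun o d o' d' h h' hb => ?_, fun o d o' d' h h' hs => ?_⟩
  · obtain ⟨hb, hs⟩ := hx.2.2 _ _ _ _ _ h h'
    exact Prod.ext hb hs
  · exact Prod.ext hb (hx.1 _ _ _ _ _ h (by rw [hb]; exact h')).1
  · exact Prod.ext (hx.2.1 _ _ _ _ _ h (by rw [hs]; exact h')).1 hs

theorem pairwiseDistinct_ordersOf (hx : Feasible x) : PairwiseDistinct (OrdersOf x) := by
  refine ⟨fun o ho o' ho' hb => ?_, fun o ho o' ho' hs => ?_⟩ <;>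
    obtain ⟨d, hd⟩ := mem_ordersOf.1 ho <;> obtain ⟨d', hd'⟩ := mem_ordersOf.1 ho'
  · exact hx.courierAlloc.2.2.1 o d o' d' hd hd' hb
  · exact hx.courierAlloc.2.2.2 o d o' d' hd hd' hs

end Feasible

section Equilibrium

variable {v : Fin m → Fin n → ℝ} {c : Fin l → Fin m → Fin n → ℝ} {p : Fin n → ℝ}
  {w : Fin m → Fin n → ℝ} {x : Fin m → Fin n → Fin l → Bool}

theorem WithTipEq.courierPlan (h : WithTipEq v c p w (fun _ _ => 0) x) :
    CourierPlan c (fun o => w o.1 o.2) (courierAllocOf x) := by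
  obtain ⟨hfeas, -, hw, -, -, -, hbest, hidle, -, -⟩ := h
  refine ⟨hfeas.courierAlloc, fun o => hw o.1 o.2, fun d o hod => ?_, fun d hd o => ?_⟩
  · obtain ⟨h₀, hmax⟩ := hbest d o.1 o.2 hod
    exact ⟨by simpa [cUtil] using h₀, fun o' => by simpa [cUtil] using hmax o'.1 o'.2⟩
  · simpa [cUtil] using hidle d (fun b s => hd (b, s)) o.1 o.2

theorem WithTipEq.of_courierPlan (h : WithTipEq v c p w (fun _ _ => 0) x)
    {W : Fin m × Fin n → ℝ} (hW : CourierPlan c W (courierAllocOf x))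
    (hzero : ∀ o ∉ OrdersOf x, W o = 0)
    (htip : ∀ b s, (b, s) ∉ OrdersOf x →
      minTip c w (fun _ _ => 0) b s ≤ minTip c (fun b s => W (b, s)) (fun _ _ => 0) b s ∨
        v b s ≤ minTip c (fun b s => W (b, s)) (fun _ _ => 0) b s) :
    WithTipEq v c p (fun b s => W (b, s)) (fun _ _ => 0) x := by
  obtain ⟨hfeas, hp, -, -, hbuy, hbuyn, -, -, hps, -⟩ := h
  have hoff : ∀ b s, (b, s) ∉ OrdersOf x → ∀ r, 0 ≤ r →
      v b s - p s - minTip c w (fun _ _ => 0) b s ≤ r →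
      v b s - p s - minTip c (fun b s => W (b, s)) (fun _ _ => 0) b s ≤ r := by
    intro b s hbs r hr hold
    rcases htip b s hbs with hle | hle <;> linarith [hp s]
  refine ⟨hfeas, hp, fun b s => hW.2.1 (b, s), fun _ _ => le_rfl, ?_, ?_,
    fun d b s hx => hW.inBR hx, fun d hd => hW.cUtil_nonpos fun o => hd o.1 o.2, hps,
    fun b s hbs => ⟨hzero _ fun hmem => ?_, rfl⟩⟩
  · rintro b s ⟨d, hx⟩
    obtain ⟨hge, hmax, hpay⟩ := hbuy b s ⟨d, hx⟩
    have hnew : minTip c (fun b s => W (b, s)) (fun _ _ => 0) b s = 0 := hW.minTip_eq_zero hx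
    rw [← hpay] at hge hmax
    refine ⟨by linarith, fun s' => ?_, hnew.symm⟩
    by_cases hs' : (b, s') ∈ OrdersOf x
    · obtain ⟨d', hx'⟩ := mem_ordersOf.1 hs'
      obtain rfl := (hfeas.1 b s' d' s d hx' hx).1
      exact le_rfl
    · rw [hnew]
      exact hoff b s' hs' _ (by linarith) (by linarith [hmax s'])
  · intro b hb s
    exact hoff b s (fun hmem => (mem_ordersOf.1 hmem).elim fun d => hb s d) 0 le_rfl (hbuyn b hb s)
  · exact (mem_ordersOf.1 hmem).elim hbs

end Equilibrium

theorem highest_courier_compensation_eq_general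
    (v : Fin m → Fin n → ℝ) (c : Fin l → Fin m → Fin n → ℝ)
    (hc : ∀ d b s, 0 ≤ c d b s)
    (p : Fin n → ℝ) (w : Fin m → Fin n → ℝ) (x : Fin m → Fin n → Fin l → Bool)
    (h : WithTipEq v c p w (fun _ _ => 0) x)
    (wbar : Fin m × Fin n → ℝ) (y : Fin m × Fin n → Fin l → Bool)
    (hplan : CourierPlan c wbar y) (hserve : Serves (OrdersOf x) y)
    (hzero : ∀ o ∉ OrdersOf x, wbar o = 0)
    (hlt : (OrdersOf x).card < l → ∀ d,
      planUtil c wbar y d = minCostWithout c (OrdersOf x) d - minCost c (OrdersOf x))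
    (heq : (OrdersOf x).card = l → ∀ d b s, v b s ≤ planUtil c wbar y d) :
    WithTipEq v c p (fun b s => wbar (b, s)) (fun _ _ => 0) x := by
  have ⟨hfeas, _, _, _, _, _, _, _, _, hundelivered⟩ := h
  have hold := h.courierPlan
  have hx := serves_courierAllocOf x
  have hnew : CourierPlan c wbar (courierAllocOf x) :=
    hplan.of_totalCost_le hserve hfeas.courierAlloc hx (hold.totalCost_le hx hplan.1 hserve)
  refine h.of_courierPlan hnew hzero fun b s hbs => ?_
  have hw : w b s = 0 := (hundelivered b s fun d hd => hbs (mem_ordersOf.2 ⟨d, hd⟩)).1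
  rw [hold.minTip_eq_iInf, hplan.minTip_eq_iInf, hzero _ hbs]
  rcases isEmpty_or_nonempty (Fin l) with hl | hl
  · simp -- over no couriers both infima take the junk value `0`
  rcases (hserve.card_le hplan.1).lt_or_eq with hcard | hcard
  · refine Or.inl (ciInf_mono (Set.finite_range _).bddBelow fun d => ?_)
    have := hold.planUtil_le_minCostWithout_sub_minCost hx hfeas.pairwiseDistinct_ordersOf hcard d
    simp only [hw, hlt hcard d]
    linarith
  · exact Or.inr (le_ciInf fun d => by linarith [heq hcard d b s, hc d b s])

/-- Lemma 4.2: If `(p, w, 0, x)` is a with-tip equilibrium with all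
tips zero, then replacing `w` by the compensations `w̄` of a courier plan serving
`Ω_x` (zero outside `Ω_x`) under which every courier attains the maximal
courier-plan utility `ū_d` again yields a with-tip equilibrium. -/
theorem highest_courier_compensation_eq
    (v : Fin m → Fin n → ℝ) (c : Fin l → Fin m → Fin n → ℝ)
    (hv : ∀ b s, 0 ≤ v b s) (hc : ∀ d b s, 0 ≤ c d b s)
    (p : Fin n → ℝ) (w : Fin m → Fin n → ℝ) (x : Fin m → Fin n → Fin l → Bool)
    (h : WithTipEq v c p w (fun _ _ => 0) x)
    (wbar : Fin m × Fin n → ℝ) (y : Fin m × Fin n → Fin l → Bool)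
    (hplan : CourierPlan c wbar y) (hserve : Serves (OrdersOf x) y)
    (hzero : ∀ o ∉ OrdersOf x, wbar o = 0)
    (hlt : (OrdersOf x).card < l → ∀ d,
      planUtil c wbar y d = minCostWithout c (OrdersOf x) d - minCost c (OrdersOf x))
    (heq : (OrdersOf x).card = l → ∀ d b s, v b s ≤ planUtil c wbar y d) :
    WithTipEq v c p (fun b s => wbar (b, s)) (fun _ _ => 0) x :=
  highest_courier_compensation_eq_general v c hc p w x h wbar y hplan hserve hzero hlt heq

end DeliveryPlatform
end
end

section
/- For every real number K > 0 there exists a market with single-minded buyers (each buyer has positive valuation for at most one store) in which a without-tip equilibrium exists, the optimal welfare satisfies OPT ≥ K, and every without-tip equilibrium has welfare at most −K. (One such market is the market with buyers b1, b2 valuing the single store s1 at 3K and 10K respectively, and couriers d1, d2 with costs c_{d1}(b1,s1)=0, c_{d1}(b2,s1)=11K, c_{d2}(b1,s1)=K, c_{d2}(b2,s1)=12K.) -/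
open scoped Classical
noncomputable section

namespace DeliveryPlatform

variable {m n l : ℕ}

/-!
In the example market the single store goes to `b₂` in every without-tip equilibrium: an
unmatched buyer values each store at most at its price, and a store with positive price is bought
by someone valuing it at least that much, so `b₂` (value `10K`) cannot lose the store to `b₁`
(value `3K`). But each courier's cost of delivering to `b₂` exceeds `10K` by at least `K`, while
serving `b₁` with `d₁` would yield welfare `3K`.
-/

def singleTriple (b : Fin m) (s : Fin n) (d : Fin l) : Fin m → Fin n → Fin l → Bool :=
  fun b' s' d' => decide (b' = b ∧ s' = s ∧ d' = d)

lemma feasible_singleTriple (b : Fin m) (s : Fin n) (d : Fin l) :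
    Feasible (singleTriple b s d) := by
  refine ⟨?_, ?_, ?_⟩ <;> intros <;> simp_all [singleTriple]

lemma welfare_singleTriple (v : Fin m → Fin n → ℝ) (c : Fin l → Fin m → Fin n → ℝ)
    (b : Fin m) (s : Fin n) (d : Fin l) :
    Welfare v c (singleTriple b s d) = v b s - c d b s := by
  simp [Welfare, singleTriple, ite_and]

lemma welfare_le_OPT (v : Fin m → Fin n → ℝ) (c : Fin l → Fin m → Fin n → ℝ)
    {x : Fin m → Fin n → Fin l → Bool} (hx : Feasible x) : Welfare v c x ≤ OPT v c :=
  le_csSup ((Set.finite_range (Welfare v c)).bddAbove.mono fun _ ⟨x, _, hr⟩ => Set.mem_range.2 ⟨x, hr⟩)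
    ⟨x, hx, rfl⟩

lemma Feasible.eq_singleTriple [Subsingleton (Fin n)] {x : Fin m → Fin n → Fin l → Bool}
    (hx : Feasible x) {b : Fin m} {s : Fin n} {d : Fin l} (hbsd : x b s d) :
    x = singleTriple b s d := by
  funext b' s' d'
  obtain rfl : s' = s := Subsingleton.elim _ _
  rw [Bool.eq_iff_iff]
  simp only [singleTriple, decide_eq_true_eq, true_and]
  constructor
  · intro h
    obtain ⟨rfl, rfl⟩ := hx.2.1 _ _ _ _ _ hbsd h
    exact ⟨rfl, rfl⟩
  · rintro ⟨rfl, rfl⟩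
    exact hbsd

lemma WithoutTipEq.exists_buyer_of_unmatched {v : Fin m → Fin n → ℝ}
    {c : Fin l → Fin m → Fin n → ℝ} {p : Fin n → ℝ} {w : Fin m → Fin n → ℝ}
    {x : Fin m → Fin n → Fin l → Bool} (h : WithoutTipEq v c p w x) {b : Fin m}
    (hb : ∀ s d, ¬ x b s d) {s : Fin n} (hs : 0 < v b s) :
    ∃ b' d, x b' s d ∧ v b s ≤ v b' s := by
  obtain ⟨-, -, -, hbuy, hunmatched, -, -, hunsold, -⟩ := h
  have hvp := hunmatched b hb s
  by_cases hsold : ∃ b' d, x b' s d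
  · obtain ⟨b', d, hx⟩ := hsold
    exact ⟨b', d, hx, by linarith [(hbuy b' s ⟨d, hx⟩).1]⟩
  · push Not at hsold
    linarith [hunsold s hsold]

section Example

variable (K : ℝ)

/- The paper's buyers `b₁, b₂` and couriers `d₁, d₂` are indexed by `0, 1`. -/
def exampleValuation : Fin 2 → Fin 1 → ℝ := fun b _ => ![3 * K, 10 * K] b

def exampleCost : Fin 2 → Fin 2 → Fin 1 → ℝ := fun d b _ => ![![0, 11 * K], ![K, 12 * K]] d b

variable {K}

/- Paying `11K` for `b₂`'s order makes `d₁` (just) willing to deliver it, while `d₂` stays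
idle; the price `10K` prices `b₁` out. -/
lemma exampleMarket_withoutTipEq (hK : 0 ≤ K) :
    WithoutTipEq (exampleValuation K) (exampleCost K) (fun _ => 10 * K)
      (fun b _ => ![0, 11 * K] b) (singleTriple 1 0 0) := by
  refine ⟨feasible_singleTriple 1 0 0, fun _ => by positivity, ?_, ?_, ?_, ?_, ?_, ?_, ?_⟩ <;>
    simp [singleTriple, exampleValuation, exampleCost, Fin.forall_fin_two, Fin.forall_fin_one, hK] <;>
    linarith

lemma exampleMarket_welfare_le (hK : 0 < K) {p : Fin 1 → ℝ} {w : Fin 2 → Fin 1 → ℝ}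
    {x : Fin 2 → Fin 1 → Fin 2 → Bool}
    (heq : WithoutTipEq (exampleValuation K) (exampleCost K) p w x) :
    Welfare (exampleValuation K) (exampleCost K) x ≤ -K := by
  have hmatched : ∃ d, x 1 0 d := by
    by_contra! h
    obtain ⟨b', d, hx, hle⟩ := heq.exists_buyer_of_unmatched (b := 1) (s := 0)
      (fun s d => Subsingleton.elim s 0 ▸ h d) (by simp [exampleValuation, hK])
    fin_cases b'
    · linarith [show (10 : ℝ) * K ≤ 3 * K from hle]
    · exact h d hx
  obtain ⟨d, hd⟩ := hmatched
  rw [heq.1.eq_singleTriple hd, welfare_singleTriple]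
  fin_cases d <;> simp [exampleValuation, exampleCost] <;> linarith

end Example

/-- For every `K > 0` there is a market with single-minded buyers
in which a without-tip equilibrium exists, `OPT ≥ K`, and every without-tip
equilibrium has welfare at most `−K`. -/
theorem without_tip_arbitrarily_bad_single_minded (K : ℝ) (hK : 0 < K) :
    ∃ (m n l : ℕ) (v : Fin m → Fin n → ℝ) (c : Fin l → Fin m → Fin n → ℝ),
      (∀ b s, 0 ≤ v b s) ∧ (∀ d b s, 0 ≤ c d b s) ∧
      (∀ b s s', 0 < v b s → 0 < v b s' → s = s') ∧
      (∃ (p : Fin n → ℝ) (w : Fin m → Fin n → ℝ) (x : Fin m → Fin n → Fin l → Bool),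
        WithoutTipEq v c p w x) ∧
      K ≤ OPT v c ∧
      (∀ (p : Fin n → ℝ) (w : Fin m → Fin n → ℝ) (x : Fin m → Fin n → Fin l → Bool),
        WithoutTipEq v c p w x → Welfare v c x ≤ -K) := by
  refine ⟨2, 1, 2, exampleValuation K, exampleCost K, ?_, ?_,
    fun _ s s' _ _ => Subsingleton.elim s s', ⟨_, _, _, exampleMarket_withoutTipEq hK.le⟩, ?_,
    fun _ _ _ => exampleMarket_welfare_le hK⟩
  · intro b s
    fin_cases b <;> simp [exampleValuation, hK.le]
  · intro d b s
    fin_cases d <;> fin_cases b <;> simp [exampleCost, hK.le]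
  · calc K ≤ 3 * K := by linarith
      _ = Welfare (exampleValuation K) (exampleCost K) (singleTriple 0 0 0) := by
        simp [welfare_singleTriple, exampleValuation, exampleCost]
      _ ≤ OPT (exampleValuation K) (exampleCost K) :=
        welfare_le_OPT _ _ (feasible_singleTriple 0 0 0)

end DeliveryPlatform
end
end
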